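/- Let Φ : M_n → M_n be a Hermiticity-preserving linear map and let 1 ≤ k ≤ n. Then the following are equivalent: (i) for every m ≥ 1 and every positive semidefinite ρ ∈ M_m ⊗ M_n, the matrix (id_m ⊗ Φ)(ρ) is k-block positive; (ii) Φ is k-positive. (This is Corollary 4.4(d): Φ : M_n → OMIN^k(M_n) is completely positive if and only if Φ is k-positive.) -/

import Mathlib

open scoped ComplexOrder Kronecker
open Matrix

noncomputable section

/-- The standard inner product `⟨v, w⟩ = ∑ conj(vᵢ) wᵢ` on `I → ℂ`. -/
def inprod {I : Type*} [Fintype I] (v w : I → ℂ) : ℂ :=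
  ∑ i, (starRingEnd ℂ) (v i) * w i

/-- `v` is a unit vector. -/
def UnitVec {I : Type*} [Fintype I] (v : I → ℂ) : Prop :=
  inprod v v = 1

/-- The Schmidt rank of a vector in `ℂ^I ⊗ ℂ^J`, i.e. the rank of the associated
`I × J` coefficient matrix. -/
noncomputable def SchmidtRank {I J : Type*} [Fintype I] [Fintype J] (v : I × J → ℂ) : ℕ :=
  (Matrix.of fun i j => v (i, j)).rank

/-- The operator norm (largest singular value) of a matrix, as
`sup { |⟨v, A w⟩| : v, w unit vectors }`. -/
noncomputable def opNorm {I J : Type*} [Fintype I] [Fintype J] (A : Matrix I J ℂ) : ℝ :=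
  sSup { t : ℝ | ∃ v w, UnitVec v ∧ UnitVec w ∧ t = ‖inprod v (A.mulVec w)‖ }

/-- The `S(k)`-norm of `X ∈ M_I ⊗ M_J`. -/
noncomputable def SNorm {I J : Type*} [Fintype I] [Fintype J] (k : ℕ)
    (X : Matrix (I × J) (I × J) ℂ) : ℝ :=
  sSup { t : ℝ | ∃ v w : I × J → ℂ, UnitVec v ∧ UnitVec w ∧
    SchmidtRank v ≤ k ∧ SchmidtRank w ≤ k ∧
    t = ‖inprod v (X.mulVec w)‖ }

/-- `X` is a `k`-block positive (Hermitian) operator: `⟨v, X v⟩ ≥ 0` for every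
vector of Schmidt rank at most `k`. -/
def kBlockPos {I J : Type*} [Fintype I] [Fintype J] (k : ℕ)
    (X : Matrix (I × J) (I × J) ℂ) : Prop :=
  X.IsHermitian ∧ ∀ v : I × J → ℂ, SchmidtRank v ≤ k → 0 ≤ inprod v (X.mulVec v)

/-- `ρ` has Schmidt number at most `k` (in particular it is positive semidefinite):
it is a finite nonnegative combination of rank-one projections onto vectors of
Schmidt rank at most `k`. -/
def SchmidtNumberLE {I J : Type*} [Fintype I] [Fintype J] (k : ℕ)
    (ρ : Matrix (I × J) (I × J) ℂ) : Prop :=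
  ∃ (N : ℕ) (c : Fin N → ℝ) (v : Fin N → (I × J → ℂ)),
    (∀ i, 0 ≤ c i) ∧ (∀ i, SchmidtRank (v i) ≤ k) ∧
    ρ = ∑ i, (c i : ℂ) • Matrix.vecMulVec (v i) (star (v i))

/-- `id_I ⊗ Φ` : the map applying `Φ` to the second tensor factor. -/
noncomputable def tensorId {I : Type*} [Fintype I] {a b : ℕ}
    (Φ : Matrix (Fin a) (Fin a) ℂ →ₗ[ℂ] Matrix (Fin b) (Fin b) ℂ)
    (X : Matrix (I × Fin a) (I × Fin a) ℂ) : Matrix (I × Fin b) (I × Fin b) ℂ :=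
  Matrix.of fun p q => Φ (Matrix.of fun s t => X (p.1, s) (q.1, t)) p.2 q.2

/-- The trace norm `‖X‖_tr = Tr √(X^* X)`. -/
noncomputable def trNorm {I : Type*} [Fintype I] [DecidableEq I] (X : Matrix I I ℂ) : ℝ :=
  (((Matrix.posSemidef_conjTranspose_mul_self X).1.eigenvectorUnitary : Matrix I I ℂ) *
    diagonal ((fun x : ℝ => (x : ℂ)) ∘ (√·) ∘ (Matrix.posSemidef_conjTranspose_mul_self X).1.eigenvalues) *
    (star (Matrix.posSemidef_conjTranspose_mul_self X).1.eigenvectorUnitary : Matrix I I ℂ)).trace.re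

end

/-! A vector of Schmidt rank at most `k` has the form `(A ⊗ 1) w` with `A : ℂ^k → ℂ^m`, by a rank
factorization of its coefficient matrix. Since `id ⊗ Φ` commutes with compressions by `A ⊗ 1`,
`⟨v, (id_m ⊗ Φ)(ρ) v⟩ = ⟨w, (id_k ⊗ Φ)((A ⊗ 1)* ρ (A ⊗ 1)) w⟩`, which is nonnegative when `Φ` is
`k`-positive. Conversely, every vector of `ℂ^k ⊗ ℂ^n` has Schmidt rank at most `k`, so `k`-block
positivity of `(id_k ⊗ Φ)(X)` is positive semidefiniteness. -/

theorem Matrix.exists_mul_eq_of_rank_le {K m n : Type*} [Field K] [Fintype n]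
    [DecidableEq n] {V : Matrix m n K} {k : ℕ} (h : V.rank ≤ k) :
    ∃ (A : Matrix m (Fin k) K) (B : Matrix (Fin k) n K), V = A * B := by
  set f := V.mulVecLin
  obtain ⟨ι, hι⟩ : ∃ ι : LinearMap.range f →ₗ[K] (Fin k → K), Function.Injective ι :=
    finrank_le_iff_exists_linearMap.1 (by rwa [Module.finrank_fin_fun])
  obtain ⟨π, hπ⟩ := ι.exists_leftInverse_of_injective (LinearMap.ker_eq_bot.2 hι)
  refine ⟨LinearMap.toMatrix' ((LinearMap.range f).subtype ∘ₗ π),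
    LinearMap.toMatrix' (ι ∘ₗ f.rangeRestrict), ?_⟩
  rw [← LinearMap.toMatrix'_comp, LinearMap.comp_assoc, ← LinearMap.comp_assoc _ ι, hπ,
    LinearMap.id_comp, LinearMap.subtype_comp_codRestrict]
  exact (LinearMap.toMatrix'_toLin' V).symm

theorem Matrix.kronecker_one_mulVec {R I K J : Type*} [CommSemiring R] [Fintype K] [Fintype J]
    [DecidableEq J] (A : Matrix I K R) (w : K × J → R) :
    (A ⊗ₖ (1 : Matrix J J R)) *ᵥ w = fun p => (A * of fun a j => w (a, j)) p.1 p.2 := by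
  ext ⟨i, j⟩
  simp [mulVec, dotProduct, Fintype.sum_prod_type, one_apply, mul_apply]

theorem Matrix.kronecker_one_mul_mul_kronecker_one_apply {R I J α : Type*} [CommSemiring R]
    [Fintype I] [Fintype J] [Fintype α] [DecidableEq α] (C : Matrix J I R)
    (X : Matrix (I × α) (I × α) R) (D : Matrix I J R) (j j' : J) (s t : α) :
    ((C ⊗ₖ (1 : Matrix α α R)) * X * (D ⊗ₖ (1 : Matrix α α R))) (j, s) (j', t)
      = ∑ i, ∑ i', C j i * D i' j' * X (i, s) (i', t) := by
  simp only [mul_apply, kroneckerMap_apply, one_apply, mul_ite, mul_one, mul_zero, ite_mul,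
    zero_mul, Fintype.sum_prod_type, Finset.sum_ite_eq, Finset.sum_ite_eq', Finset.mem_univ,
    if_true, Finset.sum_mul]
  rw [Finset.sum_comm]
  exact Finset.sum_congr rfl fun i _ => Finset.sum_congr rfl fun i' _ => by ring

theorem tensorId_kronecker_one_mul_mul {I J : Type*} [Fintype I] [Fintype J] {a b : ℕ}
    (Φ : Matrix (Fin a) (Fin a) ℂ →ₗ[ℂ] Matrix (Fin b) (Fin b) ℂ) (C : Matrix J I ℂ)
    (X : Matrix (I × Fin a) (I × Fin a) ℂ) (D : Matrix I J ℂ) :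
    tensorId Φ ((C ⊗ₖ (1 : Matrix (Fin a) (Fin a) ℂ)) * X * (D ⊗ₖ (1 : Matrix (Fin a) (Fin a) ℂ)))
      = (C ⊗ₖ (1 : Matrix (Fin b) (Fin b) ℂ)) * tensorId Φ X
          * (D ⊗ₖ (1 : Matrix (Fin b) (Fin b) ℂ)) := by
  ext ⟨j, s⟩ ⟨j', t⟩
  have hblock :
      (of fun s t => ((C ⊗ₖ (1 : Matrix (Fin a) (Fin a) ℂ)) * X
        * (D ⊗ₖ (1 : Matrix (Fin a) (Fin a) ℂ))) (j, s) (j', t))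
      = ∑ i, ∑ i', (C j i * D i' j') • of fun s t => X (i, s) (i', t) := by
    ext s t
    simp [kronecker_one_mul_mul_kronecker_one_apply, Matrix.sum_apply]
  rw [kronecker_one_mul_mul_kronecker_one_apply]
  simp only [tensorId, of_apply, hblock, map_sum, map_smul, Matrix.sum_apply, Matrix.smul_apply,
    smul_eq_mul]

theorem tensorId_isHermitian {I : Type*} [Fintype I] {a b : ℕ}
    {Φ : Matrix (Fin a) (Fin a) ℂ →ₗ[ℂ] Matrix (Fin b) (Fin b) ℂ} (hΦ : ∀ X, Φ Xᴴ = (Φ X)ᴴ)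
    {X : Matrix (I × Fin a) (I × Fin a) ℂ} (hX : X.IsHermitian) : (tensorId Φ X).IsHermitian := by
  ext ⟨i, s⟩ ⟨i', t⟩
  have hblock : (of fun s t => X (i, s) (i', t)) = (of fun s t => X (i', s) (i, t))ᴴ := by
    ext s t
    exact (hX.apply _ _).symm
  simp only [conjTranspose_apply, tensorId, of_apply, hblock, hΦ]

theorem exists_eq_kronecker_one_mulVec_of_schmidtRank_le {I J : Type*} [Fintype I] [Fintype J]
    [DecidableEq J] {k : ℕ} {v : I × J → ℂ} (hv : SchmidtRank v ≤ k) :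
    ∃ (A : Matrix I (Fin k) ℂ) (w : Fin k × J → ℂ), v = (A ⊗ₖ (1 : Matrix J J ℂ)) *ᵥ w := by
  obtain ⟨A, B, hAB⟩ := exists_mul_eq_of_rank_le hv
  refine ⟨A, fun q => B q.1 q.2, ?_⟩
  rw [kronecker_one_mulVec]
  ext ⟨i, j⟩
  exact congrFun (congrFun hAB i) j

theorem kBlockPos_tensorId_of_kPositive {I : Type*} [Fintype I] {k a b : ℕ}
    {Φ : Matrix (Fin a) (Fin a) ℂ →ₗ[ℂ] Matrix (Fin b) (Fin b) ℂ} (hΦ : ∀ X, Φ Xᴴ = (Φ X)ᴴ)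
    (hΦk : ∀ X : Matrix (Fin k × Fin a) (Fin k × Fin a) ℂ,
      X.PosSemidef → (tensorId Φ X).PosSemidef)
    {ρ : Matrix (I × Fin a) (I × Fin a) ℂ} (hρ : ρ.PosSemidef) : kBlockPos k (tensorId Φ ρ) := by
  refine ⟨tensorId_isHermitian hΦ hρ.1, fun v hv => ?_⟩
  obtain ⟨A, w, rfl⟩ := exists_eq_kronecker_one_mulVec_of_schmidtRank_le hv
  have hcompressed := hΦk _ (hρ.conjTranspose_mul_mul_same (A ⊗ₖ (1 : Matrix (Fin a) (Fin a) ℂ)))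
  rw [conjTranspose_kronecker, conjTranspose_one, tensorId_kronecker_one_mul_mul] at hcompressed
  change 0 ≤ star ((A ⊗ₖ (1 : Matrix (Fin b) (Fin b) ℂ)) *ᵥ w) ⬝ᵥ
    (tensorId Φ ρ *ᵥ ((A ⊗ₖ (1 : Matrix (Fin b) (Fin b) ℂ)) *ᵥ w))
  rw [star_mulVec, conjTranspose_kronecker, conjTranspose_one, mulVec_mulVec,
    ← dotProduct_mulVec, mulVec_mulVec, ← Matrix.mul_assoc]
  exact hcompressed.dotProduct_mulVec_nonneg w

theorem kBlockPos.posSemidef {I J : Type*} [Fintype I] [Fintype J] {k : ℕ}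
    {X : Matrix (I × J) (I × J) ℂ} (hX : kBlockPos k X) (hI : Fintype.card I ≤ k) :
    X.PosSemidef :=
  .of_dotProduct_mulVec_nonneg hX.1 fun v => hX.2 v ((rank_le_card_height _).trans hI)

theorem cp_into_kSuperMinimal_iff_kPositive_general (n k : ℕ)
    (Φ : Matrix (Fin n) (Fin n) ℂ →ₗ[ℂ] Matrix (Fin n) (Fin n) ℂ)
    (hΦ : ∀ X, Φ Xᴴ = (Φ X)ᴴ) :
    (∀ (m : ℕ), 0 < m → ∀ ρ : Matrix (Fin m × Fin n) (Fin m × Fin n) ℂ,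
        ρ.PosSemidef → kBlockPos k (tensorId Φ ρ))
      ↔ (∀ X : Matrix (Fin k × Fin n) (Fin k × Fin n) ℂ,
          X.PosSemidef → (tensorId Φ X).PosSemidef) := by
  refine ⟨fun hcp X hX => ?_, fun hΦk _ _ _ hρ => kBlockPos_tensorId_of_kPositive hΦ hΦk hρ⟩
  rcases k.eq_zero_or_pos with rfl | hk
  · exact Subsingleton.elim (tensorId Φ X) 0 ▸ .zero
  · exact (hcp k hk X hX).posSemidef (Fintype.card_fin k).le

/-- Corollary 4.4(d): `Φ : M_n → OMIN^k(M_n)` is completely positive iff `Φ` is `k`-positive. -/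
theorem cp_into_kSuperMinimal_iff_kPositive (n k : ℕ) (hk : 1 ≤ k) (hkn : k ≤ n)
    (Φ : Matrix (Fin n) (Fin n) ℂ →ₗ[ℂ] Matrix (Fin n) (Fin n) ℂ)
    (hΦ : ∀ X, Φ Xᴴ = (Φ X)ᴴ) :
    (∀ (m : ℕ), 0 < m → ∀ ρ : Matrix (Fin m × Fin n) (Fin m × Fin n) ℂ,
        ρ.PosSemidef → kBlockPos k (tensorId Φ ρ))
      ↔ (∀ X : Matrix (Fin k × Fin n) (Fin k × Fin n) ℂ,
          X.PosSemidef → (tensorId Φ X).PosSemidef) :=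
  cp_into_kSuperMinimal_iff_kPositive_general n k Φ hΦ
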